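/- arXiv:2507.21020 — 3 statements merged into one kernel-verified Lean document; each statement's English description precedes it below -/
import Mathlib

section
/- Let f be integrable on a cube Q and 0 < s < t < 1. Then M_t(f,Q) - M_s(f,Q) ≤ (1/(1-t) + 1/s) · (1/|Q|) ∫_Q |f - ⟨f⟩_Q| dx, where ⟨f⟩_Q is the average of f over Q. In particular, if f ∈ BMO(R^n) then sup_Q [M_t(f,Q) - M_s(f,Q)] ≤ (1/(1-t) + 1/s) ‖f‖_BMO. -/
open MeasureTheory Set

noncomputable section

/-- The axis-parallel half-open cube with corner `a` and side length `h`. -/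
def cube {n : ℕ} (a : Fin n → ℝ) (h : ℝ) : Set (Fin n → ℝ) :=
  Set.univ.pi fun i => Set.Ico (a i) (a i + h)

def IsCube {n : ℕ} (Q : Set (Fin n → ℝ)) : Prop :=
  ∃ a h, 0 < h ∧ Q = cube a h

/-- The upper `s`-median of `f` on `Q`. -/
def med {n : ℕ} (s : ℝ) (f : (Fin n → ℝ) → ℝ) (Q : Set (Fin n → ℝ)) : ℝ :=
  sSup {l : ℝ | (volume {x ∈ Q | f x < l}).toReal ≤ s * (volume Q).toReal}

/-- Average of `f` over `Q`. -/
def cubeAvg {n : ℕ} (f : (Fin n → ℝ) → ℝ) (Q : Set (Fin n → ℝ)) : ℝ :=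
  (volume Q).toReal⁻¹ * ∫ x in Q, f x

/-- Mean oscillation of `f` over `Q`. -/
def cubeOsc {n : ℕ} (f : (Fin n → ℝ) → ℝ) (Q : Set (Fin n → ℝ)) : ℝ :=
  (volume Q).toReal⁻¹ * ∫ x in Q, |f x - cubeAvg f Q|

/-! By Chebyshev's inequality for `|f - c|`, with `O = ∫_Q |f - c|` and any constant `c`, the
sets `{f < c - λ}` and `{f ≥ c + λ}` have measure at most `O / λ`. Hence the upper `u`-median lies
in `[c - O / (u |Q|), c + O / ((1 - u) |Q|)]`; subtracting the bounds for `u = s` and `u = t` and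
taking `c = ⟨f⟩_Q` gives the estimate, and the BMO bound follows by taking the supremum. -/

namespace MedianOscillation

section Quantile

variable {α : Type*} [MeasurableSpace α] {μ : Measure α} [IsFiniteMeasure μ] {f : α → ℝ}

def upperQuantile (μ : Measure α) (u : ℝ) (f : α → ℝ) : ℝ :=
  sSup {l : ℝ | μ.real {x | f x < l} ≤ u * μ.real univ}

theorem mul_measureReal_le_integral_abs_sub (hf : Integrable f μ) (c : ℝ) {lam : ℝ}
    (hlam : 0 ≤ lam) {s : Set α} (hs : ∀ x ∈ s, lam ≤ |f x - c|) :
    lam * μ.real s ≤ ∫ x, |f x - c| ∂μ :=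
  calc lam * μ.real s ≤ lam * μ.real {x | lam ≤ |f x - c|} :=
        mul_le_mul_of_nonneg_left (measureReal_mono hs) hlam
    _ ≤ ∫ x, |f x - c| ∂μ :=
        mul_meas_ge_le_integral_of_nonneg (ae_of_all _ fun _ => abs_nonneg _)
          (hf.sub (integrable_const c)).abs lam

variable [NeZero μ]

theorem measureReal_lt_sub_le (hf : Integrable f μ) (c : ℝ) {lam u : ℝ} (hu : 0 < u)
    (hlam : (∫ x, |f x - c| ∂μ) / (u * μ.real univ) < lam) :
    μ.real {x | f x < c - lam} ≤ u * μ.real univ := by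
  have huV : 0 < u * μ.real univ := mul_pos hu measureReal_univ_pos
  have hlam0 : 0 < lam :=
    (div_nonneg (integral_nonneg fun _ => abs_nonneg _) huV.le).trans_lt hlam
  refine le_of_mul_le_mul_left ?_ hlam0
  refine (mul_measureReal_le_integral_abs_sub hf c hlam0.le fun x hx => ?_).trans ?_
  · rw [abs_sub_comm]
    exact (le_sub_comm.mp (le_of_lt hx)).trans (le_abs_self _)
  · rw [div_lt_iff₀ huV] at hlam
    linarith

theorem le_add_of_measureReal_lt_le (hf : Integrable f μ) (c : ℝ) {l u : ℝ} (hu : u < 1)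
    (hl : μ.real {x | f x < l} ≤ u * μ.real univ) :
    l ≤ c + (∫ x, |f x - c| ∂μ) / ((1 - u) * μ.real univ) := by
  have hV : 0 < (1 - u) * μ.real univ := mul_pos (sub_pos.mpr hu) measureReal_univ_pos
  rcases le_or_gt l c with hlc | hcl
  · have : 0 ≤ (∫ x, |f x - c| ∂μ) / ((1 - u) * μ.real univ) :=
      div_nonneg (integral_nonneg fun _ => abs_nonneg _) hV.le
    linarith
  -- the complement `{l ≤ f}` has measure at least `(1 - u) μ(univ)`
  have hcompl : μ.real {x | f x < l} + μ.real {x | f x < l}ᶜ = μ.real univ :=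
    measureReal_add_measureReal_compl₀
      (nullMeasurableSet_lt hf.aemeasurable aemeasurable_const)
  have hcheb : (l - c) * μ.real {x | f x < l}ᶜ ≤ ∫ x, |f x - c| ∂μ :=
    mul_measureReal_le_integral_abs_sub hf c (sub_pos.mpr hcl).le fun x (hx : ¬f x < l) =>
      (sub_le_sub_right (le_of_not_gt hx) c).trans (le_abs_self _)
  rw [← sub_le_iff_le_add', le_div_iff₀ hV]
  nlinarith

theorem upperQuantile_le_add (hf : Integrable f μ) (c : ℝ) {u : ℝ} (hu₀ : 0 < u)
    (hu₁ : u < 1) :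
    upperQuantile μ u f ≤ c + (∫ x, |f x - c| ∂μ) / ((1 - u) * μ.real univ) :=
  csSup_le ⟨_, measureReal_lt_sub_le hf c hu₀ (lt_add_one _)⟩
    fun _ hl => le_add_of_measureReal_lt_le hf c hu₁ hl

theorem sub_le_upperQuantile (hf : Integrable f μ) (c : ℝ) {u : ℝ} (hu₀ : 0 < u)
    (hu₁ : u < 1) :
    c - (∫ x, |f x - c| ∂μ) / (u * μ.real univ) ≤ upperQuantile μ u f := by
  refine le_of_forall_pos_le_add fun ε hε => ?_
  have hmem := measureReal_lt_sub_le hf c hu₀ (lt_add_of_pos_right _ hε)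
  have : c - ((∫ x, |f x - c| ∂μ) / (u * μ.real univ) + ε) ≤ upperQuantile μ u f :=
    le_csSup ⟨_, fun _ hl => le_add_of_measureReal_lt_le hf c hu₁ hl⟩ hmem
  linarith

theorem upperQuantile_sub_upperQuantile_le (hf : Integrable f μ) (c : ℝ) {s t : ℝ}
    (hs₀ : 0 < s) (hs₁ : s < 1) (ht₀ : 0 < t) (ht₁ : t < 1) :
    upperQuantile μ t f - upperQuantile μ s f ≤
      (1 / (1 - t) + 1 / s) * ((μ.real univ)⁻¹ * ∫ x, |f x - c| ∂μ) := by
  have hupper := upperQuantile_le_add hf c ht₀ ht₁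
  have hlower := sub_le_upperQuantile hf c hs₀ hs₁
  have hV := (measureReal_univ_pos (μ := μ)).ne'
  have h1t : 1 - t ≠ 0 := (sub_pos.mpr ht₁).ne'
  have hsplit : (1 / (1 - t) + 1 / s) * ((μ.real univ)⁻¹ * ∫ x, |f x - c| ∂μ) =
      (∫ x, |f x - c| ∂μ) / ((1 - t) * μ.real univ) +
        (∫ x, |f x - c| ∂μ) / (s * μ.real univ) := by
    field_simp
  linarith

end Quantile

section Cube

variable {n : ℕ}

theorem volume_cube (a : Fin n → ℝ) (h : ℝ) : volume (cube a h) = ENNReal.ofReal h ^ n := by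
  simp [cube, volume_pi_pi, Real.volume_Ico]

theorem IsCube.measurableSet {Q : Set (Fin n → ℝ)} (hQ : IsCube Q) : MeasurableSet Q := by
  obtain ⟨a, h, -, rfl⟩ := hQ
  exact MeasurableSet.univ_pi fun _ => measurableSet_Ico

theorem IsCube.isFiniteMeasure_restrict {Q : Set (Fin n → ℝ)} (hQ : IsCube Q) :
    IsFiniteMeasure (volume.restrict Q) := by
  obtain ⟨a, h, -, rfl⟩ := hQ
  rw [MeasureTheory.isFiniteMeasure_restrict, volume_cube]
  exact ENNReal.pow_ne_top ENNReal.ofReal_ne_top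

theorem IsCube.neZero_restrict {Q : Set (Fin n → ℝ)} (hQ : IsCube Q) :
    NeZero (volume.restrict Q) := by
  obtain ⟨a, h, hh, rfl⟩ := hQ
  refine ⟨fun h0 => ?_⟩
  rw [Measure.restrict_eq_zero, volume_cube] at h0
  simp only [pow_eq_zero_iff', ENNReal.ofReal_eq_zero] at h0
  exact hh.not_ge h0.1

theorem med_eq_upperQuantile (u : ℝ) (f : (Fin n → ℝ) → ℝ) {Q : Set (Fin n → ℝ)}
    (hQ : MeasurableSet Q) : med u f Q = upperQuantile (volume.restrict Q) u f := by
  unfold med upperQuantile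
  congr 1
  ext l
  show volume.real {x ∈ Q | f x < l} ≤ u * volume.real Q ↔
    (volume.restrict Q).real {x | f x < l} ≤ u * (volume.restrict Q).real univ
  rw [measureReal_restrict_apply_univ, measureReal_restrict_apply' hQ, inter_comm]
  rfl

theorem cubeOsc_eq (f : (Fin n → ℝ) → ℝ) (Q : Set (Fin n → ℝ)) :
    cubeOsc f Q =
      ((volume.restrict Q).real univ)⁻¹ * ∫ x in Q, |f x - cubeAvg f Q| := by
  rw [measureReal_restrict_apply_univ]
  rfl

end Cube

end MedianOscillation

open MedianOscillation in
theorem median_diff_le_oscillation_general {n : ℕ} (f : (Fin n → ℝ) → ℝ)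
    (s t : ℝ) (hs : 0 < s) (hst : s < t) (ht : t < 1) :
    (∀ Q : Set (Fin n → ℝ), IsCube Q → IntegrableOn f Q volume →
      med t f Q - med s f Q ≤ (1 / (1 - t) + 1 / s) * cubeOsc f Q) ∧
    (∀ K : ℝ, (∀ Q : Set (Fin n → ℝ), IsCube Q → IntegrableOn f Q volume) →
      (∀ Q : Set (Fin n → ℝ), IsCube Q → cubeOsc f Q ≤ K) →
      ∀ Q : Set (Fin n → ℝ), IsCube Q →
        med t f Q - med s f Q ≤ (1 / (1 - t) + 1 / s) * K) := by
  have hcube : ∀ Q : Set (Fin n → ℝ), IsCube Q → IntegrableOn f Q volume →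
      med t f Q - med s f Q ≤ (1 / (1 - t) + 1 / s) * cubeOsc f Q := by
    intro Q hQ hf
    have := hQ.isFiniteMeasure_restrict
    have := hQ.neZero_restrict
    rw [med_eq_upperQuantile t f hQ.measurableSet, med_eq_upperQuantile s f hQ.measurableSet,
      cubeOsc_eq]
    exact upperQuantile_sub_upperQuantile_le hf (cubeAvg f Q) hs (hst.trans ht)
      (hs.trans hst) ht
  refine ⟨hcube, fun K hf hosc Q hQ => (hcube Q hQ (hf Q hQ)).trans ?_⟩
  gcongr
  exact hosc Q hQ

theorem median_diff_le_oscillation {n : ℕ} (f : (Fin n → ℝ) → ℝ) (hf : Measurable f)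
    (s t : ℝ) (hs : 0 < s) (hst : s < t) (ht : t < 1) :
    (∀ Q : Set (Fin n → ℝ), IsCube Q → IntegrableOn f Q volume →
      med t f Q - med s f Q ≤ (1 / (1 - t) + 1 / s) * cubeOsc f Q) ∧
    (∀ K : ℝ, (∀ Q : Set (Fin n → ℝ), IsCube Q → IntegrableOn f Q volume) →
      (∀ Q : Set (Fin n → ℝ), IsCube Q → cubeOsc f Q ≤ K) →
      ∀ Q : Set (Fin n → ℝ), IsCube Q →
        med t f Q - med s f Q ≤ (1 / (1 - t) + 1 / s) * K) :=
  median_diff_le_oscillation_general f s t hs hst ht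
end
end

section
/- Let 0 < s < t < 1 and let f be a real-valued measurable function on a cube Q. Then the local mean oscillation ω_a(f,Q) with a = 1-(t-s) satisfies ω_a(f,Q) ≤ M_t(f,Q) - M_s(f,Q) (in fact M_{t-s}(|f - M_s(f,Q)|, Q) ≤ M_t(f,Q) - M_s(f,Q)). -/
open MeasureTheory Set

noncomputable section

/-- The local mean oscillation `ω_a(f,Q) = inf_c M_{1-a}(|f-c|,Q)`. -/
def localOsc {n : ℕ} (a : ℝ) (f : (Fin n → ℝ) → ℝ) (Q : Set (Fin n → ℝ)) : ℝ :=
  ⨅ c : ℝ, med (1 - a) (fun x => |f x - c|) Q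

/-! Write `m = M_s(f,Q)`. If `l > 0` and `|{x ∈ Q : |f x - m| < l}| ≤ (t - s)|Q|`, then
`{f < m + l}` is covered by `{f < m - l/2}`, of measure at most `s|Q|` because `m - l/2 < m`, and
by `{|f - m| < l}`; hence `m + l ≤ M_t(f,Q)`. The bound on `ω` is the choice `c = m` in its
infimum. -/

open Filter Topology

section QuantileLevels

variable {α : Type*} [MeasurableSpace α] {μ : Measure α} {f : α → ℝ} {Q : Set α} {s r l m : ℝ}

def quantileLevels (μ : Measure α) (s : ℝ) (f : α → ℝ) (Q : Set α) : Set ℝ :=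
  {l | (μ {x ∈ Q | f x < l}).toReal ≤ s * (μ Q).toReal}

lemma med_eq_sSup_quantileLevels {n : ℕ} (s : ℝ) (f : (Fin n → ℝ) → ℝ) (Q : Set (Fin n → ℝ)) :
    med s f Q = sSup (quantileLevels volume s f Q) :=
  rfl

lemma measure_sublevel_ne_top (hQ : μ Q ≠ ⊤) (l : ℝ) : μ {x ∈ Q | f x < l} ≠ ⊤ :=
  measure_ne_top_of_subset (sep_subset _ _) hQ

lemma isLowerSet_quantileLevels (hQ : μ Q ≠ ⊤) : IsLowerSet (quantileLevels μ s f Q) :=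
  fun _ _ hle hl =>
    (ENNReal.toReal_mono (measure_sublevel_ne_top hQ _)
      (measure_mono fun _ hx => ⟨hx.1, hx.2.trans_le hle⟩)).trans hl

lemma quantileLevels_mono {t : ℝ} (hst : s ≤ t) :
    quantileLevels μ s f Q ⊆ quantileLevels μ t f Q :=
  fun _ hl => hl.trans (mul_le_mul_of_nonneg_right hst ENNReal.toReal_nonneg)

lemma zero_mem_quantileLevels_of_nonneg (hr : 0 ≤ r) (hf : ∀ x, 0 ≤ f x) :
    0 ∈ quantileLevels μ r f Q := by
  have hempty : {x ∈ Q | f x < 0} = ∅ := sep_eq_empty_iff_mem_false.2 fun x _ => (hf x).not_gt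
  change (μ {x ∈ Q | f x < 0}).toReal ≤ _
  rw [hempty, measure_empty, ENNReal.toReal_zero]
  exact mul_nonneg hr ENNReal.toReal_nonneg

lemma tendsto_measure_sublevel_atBot (hQm : MeasurableSet Q) (hf : Measurable f)
    (hQ : μ Q ≠ ⊤) : Tendsto (fun l => μ {x ∈ Q | f x < l}) atBot (𝓝 0) := by
  have hempty : ⋂ l : ℝ, {x ∈ Q | f x < l} = ∅ :=
    eq_empty_iff_forall_notMem.2 fun x hx => lt_irrefl _ (mem_iInter.1 hx (f x)).2
  simpa only [hempty, measure_empty, Function.comp_def] using tendsto_measure_iInter_atBot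
    (s := fun l : ℝ => {x ∈ Q | f x < l}) (fun l => (hQm.inter (hf measurableSet_Iio)).nullMeasurableSet)
    (fun _ _ hll' _ hx => ⟨hx.1, hx.2.trans_le hll'⟩) ⟨0, measure_sublevel_ne_top hQ 0⟩

lemma tendsto_measure_sublevel_atTop :
    Tendsto (fun l => μ {x ∈ Q | f x < l}) atTop (𝓝 (μ Q)) := by
  have hunion : ⋃ l : ℝ, {x ∈ Q | f x < l} = Q :=
    Subset.antisymm (iUnion_subset fun _ => sep_subset _ _)
      fun x hx => mem_iUnion.2 ⟨f x + 1, hx, lt_add_one _⟩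
  simpa only [hunion, Function.comp_def] using tendsto_measure_iUnion_atTop (μ := μ)
    (fun _ _ hll' _ hx => ⟨hx.1, hx.2.trans_le hll'⟩ : Monotone fun l : ℝ => {x ∈ Q | f x < l})

lemma quantileLevels_nonempty (hQm : MeasurableSet Q) (hf : Measurable f) (hQ : μ Q ≠ ⊤)
    (hs : 0 < s * (μ Q).toReal) : (quantileLevels μ s f Q).Nonempty := by
  have h := (ENNReal.tendsto_toReal ENNReal.zero_ne_top).comp
    (tendsto_measure_sublevel_atBot hQm hf hQ)
  rw [ENNReal.toReal_zero] at h
  obtain ⟨l, hl⟩ := (h.eventually_lt_const hs).exists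
  exact ⟨l, hl.le⟩

lemma quantileLevels_bddAbove (hQ : μ Q ≠ ⊤) (hs : s * (μ Q).toReal < (μ Q).toReal) :
    BddAbove (quantileLevels μ s f Q) := by
  have h := (ENNReal.tendsto_toReal hQ).comp (tendsto_measure_sublevel_atTop (f := f))
  obtain ⟨l₀, hl₀⟩ := (h.eventually_const_lt hs).exists
  exact ⟨l₀, fun l hl => le_of_not_ge fun hl₀l =>
    hl₀.not_ge (isLowerSet_quantileLevels hQ hl₀l hl)⟩

lemma add_mem_quantileLevels (hQ : μ Q ≠ ⊤) {ε : ℝ} (hε : ε < l)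
    (hm : m - ε ∈ quantileLevels μ s f Q)
    (hl : l ∈ quantileLevels μ r (fun x => |f x - m|) Q) :
    m + l ∈ quantileLevels μ (s + r) f Q := by
  have hcover : {x ∈ Q | f x < m + l} ⊆
      {x ∈ Q | f x < m - ε} ∪ {x ∈ Q | |f x - m| < l} := by
    rintro x ⟨hxQ, hx⟩
    by_cases hlow : f x < m - ε
    · exact Or.inl ⟨hxQ, hlow⟩
    · exact Or.inr ⟨hxQ, abs_lt.2 ⟨by linarith, by linarith⟩⟩
  calc (μ {x ∈ Q | f x < m + l}).toReal
      ≤ (μ {x ∈ Q | f x < m - ε} + μ {x ∈ Q | |f x - m| < l}).toReal :=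
        ENNReal.toReal_mono
          (ENNReal.add_ne_top.2 ⟨measure_sublevel_ne_top hQ _, measure_sublevel_ne_top hQ _⟩)
          ((measure_mono hcover).trans (measure_union_le _ _))
    _ = (μ {x ∈ Q | f x < m - ε}).toReal + (μ {x ∈ Q | |f x - m| < l}).toReal :=
        ENNReal.toReal_add (measure_sublevel_ne_top hQ _) (measure_sublevel_ne_top hQ _)
    _ ≤ s * (μ Q).toReal + r * (μ Q).toReal := add_le_add hm hl
    _ = (s + r) * (μ Q).toReal := (add_mul _ _ _).symm

theorem sSup_quantileLevels_abs_sub_le (hQ : μ Q ≠ ⊤) (hr : 0 ≤ r)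
    (hne : (quantileLevels μ s f Q).Nonempty) (hbdd : BddAbove (quantileLevels μ (s + r) f Q)) :
    sSup (quantileLevels μ r (fun x => |f x - sSup (quantileLevels μ s f Q)|) Q) ≤
      sSup (quantileLevels μ (s + r) f Q) - sSup (quantileLevels μ s f Q) := by
  set m := sSup (quantileLevels μ s f Q)
  refine csSup_le ⟨0, zero_mem_quantileLevels_of_nonneg hr fun _ => abs_nonneg _⟩ fun l hl => ?_
  rcases le_or_gt l 0 with hl0 | hl0
  · have hm : m ≤ sSup (quantileLevels μ (s + r) f Q) :=
      csSup_le_csSup hbdd hne (quantileLevels_mono (le_add_of_nonneg_right hr))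
    linarith
  · obtain ⟨l', hl', hlt⟩ := exists_lt_of_lt_csSup hne (by linarith : m - l / 2 < m)
    have hmid : m - l / 2 ∈ quantileLevels μ s f Q := isLowerSet_quantileLevels hQ hlt.le hl'
    have := le_csSup hbdd (add_mem_quantileLevels hQ (by linarith) hmid hl)
    linarith

end QuantileLevels

lemma IsCube.measurableSet {n : ℕ} {Q : Set (Fin n → ℝ)} (hQ : IsCube Q) : MeasurableSet Q := by
  obtain ⟨a, h, -, rfl⟩ := hQ
  exact MeasurableSet.univ_pi fun _ => measurableSet_Ico

lemma IsCube.exists_volume_eq {n : ℕ} {Q : Set (Fin n → ℝ)} (hQ : IsCube Q) :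
    ∃ h > 0, volume Q = ENNReal.ofReal h ^ n := by
  obtain ⟨a, h, hh, rfl⟩ := hQ
  refine ⟨h, hh, ?_⟩
  simp [cube, Real.volume_pi_Ico]

lemma IsCube.volume_ne_top {n : ℕ} {Q : Set (Fin n → ℝ)} (hQ : IsCube Q) : volume Q ≠ ⊤ := by
  obtain ⟨h, -, hvol⟩ := hQ.exists_volume_eq
  exact hvol ▸ ENNReal.pow_ne_top ENNReal.ofReal_ne_top

lemma IsCube.toReal_volume_pos {n : ℕ} {Q : Set (Fin n → ℝ)} (hQ : IsCube Q) :
    0 < (volume Q).toReal := by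
  obtain ⟨h, hh, hvol⟩ := hQ.exists_volume_eq
  rw [hvol, ENNReal.toReal_pow, ENNReal.toReal_ofReal hh.le]
  positivity

theorem localOsc_le_median_diff {n : ℕ} (f : (Fin n → ℝ) → ℝ) (hf : Measurable f)
    (s t : ℝ) (hs : 0 < s) (hst : s < t) (ht : t < 1)
    (Q : Set (Fin n → ℝ)) (hQ : IsCube Q) :
    med (t - s) (fun x => |f x - med s f Q|) Q ≤ med t f Q - med s f Q ∧
    localOsc (1 - (t - s)) f Q ≤ med t f Q - med s f Q := by
  have hV := hQ.toReal_volume_pos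
  have hne : (quantileLevels volume s f Q).Nonempty :=
    quantileLevels_nonempty hQ.measurableSet hf hQ.volume_ne_top (mul_pos hs hV)
  have hbdd : BddAbove (quantileLevels volume (s + (t - s)) f Q) :=
    quantileLevels_bddAbove hQ.volume_ne_top (by nlinarith)
  have hmed : med (t - s) (fun x => |f x - med s f Q|) Q ≤ med t f Q - med s f Q := by
    simpa only [med_eq_sSup_quantileLevels, add_sub_cancel] using
      sSup_quantileLevels_abs_sub_le hQ.volume_ne_top (sub_nonneg.2 hst.le) hne hbdd
  refine ⟨hmed, le_trans ?_ hmed⟩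
  rw [localOsc, sub_sub_cancel]
  refine ciInf_le ⟨0, forall_mem_range.2 fun c => Real.sSup_nonneg' ?_⟩ (med s f Q)
  exact ⟨0, zero_mem_quantileLevels_of_nonneg (sub_nonneg.2 hst.le) fun _ => abs_nonneg _, le_rfl⟩
end
end

section
/- Let E be a nonempty proper subset of R^n and d(x) = dist(x,E). For any 0 < s < t < 1 and any cube Q_0 intersecting E, M_s(d,Q_0)^n ≤ 2^n V_s(Q_0) and V_s(Q_0) ≤ C(n,s,t) M_t(d,Q_0)^n, where V_s(Q_0) := sup{δ > 0 : there exist E-free dyadic subcubes Q_1,...,Q_k of Q_0 with |Q_i| ≥ δ and ∑_i |Q_i| ≥ (1-s)|Q_0|}. -/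
open MeasureTheory Set

noncomputable section

/-- `Q` is a dyadic subcube of the cube `Q0`. -/
def IsDyadicSubcubeOf {n : ℕ} (Q0 Q : Set (Fin n → ℝ)) : Prop :=
  ∃ a h, 0 < h ∧ Q0 = cube a h ∧ ∃ (j : ℕ) (k : Fin n → ℕ), (∀ i, k i < 2 ^ j) ∧
    Q = cube (fun i => a i + k i * (h / 2 ^ j)) (h / 2 ^ j)

/-- `V_s(Q0)`: the largest `δ > 0` such that a `(1-s)` proportion of `Q0` can be filled
with pairwise disjoint `E`-free dyadic subcubes of measure at least `δ`. -/
def freeVol {n : ℕ} (E Q0 : Set (Fin n → ℝ)) (s : ℝ) : ℝ :=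
  sSup {δ : ℝ | 0 < δ ∧ ∃ F : Finset (Set (Fin n → ℝ)),
    (∀ Q ∈ F, IsDyadicSubcubeOf Q0 Q ∧ Q ∩ E = ∅ ∧ δ ≤ (volume Q).toReal) ∧
    (F : Set (Set (Fin n → ℝ))).PairwiseDisjoint id ∧
    (1 - s) * (volume Q0).toReal ≤ ∑ Q ∈ F, (volume Q).toReal}

/-!
Write `d = dist(·, E)` (for the sup metric of `Fin n → ℝ`) and `m = M_s(d, Q₀)`; the supremum
defining `m` is attained, so `|{d ≥ m} ∩ Q₀| ≥ (1 - s)|Q₀|`.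

For the first inequality take the dyadic level whose cubes have side `w` with `w < m ≤ 2w`. A cube
of side `w` meeting `{d ≥ m}` is `E`-free because its diameter is less than `w`, and these cubes
cover `{d ≥ m} ∩ Q₀`, so `V_s(Q₀) ≥ w^n ≥ (m/2)^n`.

For the second, let `E`-free cubes of measure at least `δ = r^n` cover a `(1 - s)` fraction of
`Q₀`. Shrinking each of them by `l = c r` on every side leaves a cube on which `d ≥ l` and which
keeps a `(1 - 2c)^n ≥ 1 - 2cn` fraction of its measure. With `2cn = (t - s)/(1 - s)` this gives
`|{d ≥ l} ∩ Q₀| ≥ (1 - t)|Q₀|`, that is `l ≤ M_t(d, Q₀)`.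
-/

open Metric

section

variable {n : ℕ}

section Cube

theorem mem_cube {a x : Fin n → ℝ} {h : ℝ} :
    x ∈ cube a h ↔ ∀ i, a i ≤ x i ∧ x i < a i + h := by
  simp [cube, Set.mem_pi]

theorem measurableSet_cube (a : Fin n → ℝ) (h : ℝ) : MeasurableSet (cube a h) :=
  .univ_pi fun _ => measurableSet_Ico

theorem volume_cube (a : Fin n → ℝ) {h : ℝ} (hh : 0 ≤ h) :
    volume (cube a h) = ENNReal.ofReal (h ^ n) := by
  simp [cube, Real.volume_pi_Ico, Finset.prod_const, ENNReal.ofReal_pow hh]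

theorem volume_cube_ne_top (a : Fin n → ℝ) {h : ℝ} (hh : 0 ≤ h) : volume (cube a h) ≠ ⊤ := by
  simp [volume_cube a hh]

theorem volume_real_cube (a : Fin n → ℝ) {h : ℝ} (hh : 0 ≤ h) :
    volume.real (cube a h) = h ^ n := by
  rw [measureReal_def, volume_cube a hh, ENNReal.toReal_ofReal (by positivity)]

theorem dist_lt_of_mem_cube {b x y : Fin n → ℝ} {w : ℝ} (hw : 0 < w) (hx : x ∈ cube b w)
    (hy : y ∈ cube b w) : dist x y < w := by
  refine (dist_pi_lt_iff hw).2 fun i => ?_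
  have := mem_cube.1 hx i
  have := mem_cube.1 hy i
  rw [Real.dist_eq, abs_lt]
  constructor <;> linarith

theorem cube_inter_eq_empty_of_le_infDist {E : Set (Fin n → ℝ)} {b x : Fin n → ℝ} {w : ℝ}
    (hw : 0 < w) (hx : x ∈ cube b w) (hxE : w ≤ infDist x E) : cube b w ∩ E = ∅ :=
  Set.eq_empty_of_forall_notMem fun _ ⟨hy, hyE⟩ =>
    (hxE.trans (infDist_le_dist_of_mem hyE)).not_gt (dist_lt_of_mem_cube hw hx hy)

theorem le_infDist_of_mem_cube_shrink {E : Set (Fin n → ℝ)} (hE : E.Nonempty) {b x : Fin n → ℝ}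
    {w l : ℝ} (hfree : cube b w ∩ E = ∅) (hx : x ∈ cube (fun i => b i + l) (w - 2 * l)) :
    l ≤ infDist x E := by
  by_contra! hlt
  obtain ⟨y, hyE, hxy⟩ := (infDist_lt_iff hE).1 hlt
  have hy : y ∈ cube b w := mem_cube.2 fun i => by
    have hxi := mem_cube.1 hx i
    have hyi := abs_lt.1 ((Real.dist_eq _ _) ▸ (dist_le_pi_dist x y i).trans_lt hxy)
    constructor <;> linarith
  exact (Set.eq_empty_iff_forall_notMem.1 hfree) y ⟨hy, hyE⟩

theorem pow_le_volume_real_cube_inter_le_infDist {E : Set (Fin n → ℝ)} (hE : E.Nonempty)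
    {b : Fin n → ℝ} {w l : ℝ} (hl0 : 0 ≤ l) (hl : 2 * l ≤ w) (hfree : cube b w ∩ E = ∅) :
    (w - 2 * l) ^ n ≤ volume.real (cube b w ∩ {x | l ≤ infDist x E}) := by
  have hsub : cube (fun i => b i + l) (w - 2 * l) ⊆ cube b w := fun x hx =>
    mem_cube.2 fun i => by
      have := mem_cube.1 hx i
      constructor <;> linarith
  rw [← volume_real_cube _ (by linarith)]
  refine measureReal_mono (Set.subset_inter hsub fun x hx => ?_)
    (measure_ne_top_of_subset Set.inter_subset_left (volume_cube_ne_top b (by linarith)))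
  exact le_infDist_of_mem_cube_shrink hE hfree hx

end Cube

section Dyadic

def dyadicCube (a : Fin n → ℝ) (h : ℝ) (j : ℕ) (k : Fin n → ℕ) : Set (Fin n → ℝ) :=
  cube (fun i => a i + k i * (h / 2 ^ j)) (h / 2 ^ j)

variable {a : Fin n → ℝ} {h : ℝ} {j : ℕ}

theorem isDyadicSubcubeOf_dyadicCube (hh : 0 < h) {k : Fin n → ℕ} (hk : ∀ i, k i < 2 ^ j) :
    IsDyadicSubcubeOf (cube a h) (dyadicCube a h j k) :=
  ⟨a, h, hh, rfl, j, k, hk, rfl⟩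

theorem dyadicCube_subset (hh : 0 ≤ h) {k : Fin n → ℕ} (hk : ∀ i, k i < 2 ^ j) :
    dyadicCube a h j k ⊆ cube a h := fun x hx => mem_cube.2 fun i => by
  have hxi := mem_cube.1 hx i
  have hki : (k i : ℝ) + 1 ≤ 2 ^ j := by exact_mod_cast hk i
  have hw : 0 ≤ h / 2 ^ j := by positivity
  have hkw : (k i + 1 : ℝ) * (h / 2 ^ j) ≤ 2 ^ j * (h / 2 ^ j) := by gcongr
  rw [mul_div_cancel₀ h (by positivity)] at hkw
  constructor <;> nlinarith

theorem IsDyadicSubcubeOf.exists_eq_cube_subset {Q0 Q : Set (Fin n → ℝ)}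
    (hQ : IsDyadicSubcubeOf Q0 Q) : ∃ b w, 0 < w ∧ Q = cube b w ∧ Q ⊆ Q0 := by
  obtain ⟨a, h, hh, rfl, j, k, hk, rfl⟩ := hQ
  exact ⟨_, _, by positivity, rfl, dyadicCube_subset hh.le hk⟩

theorem exists_mem_dyadicCube (hh : 0 < h) (j : ℕ) {x : Fin n → ℝ} (hx : x ∈ cube a h) :
    ∃ k : Fin n → ℕ, (∀ i, k i < 2 ^ j) ∧ x ∈ dyadicCube a h j k := by
  have hw : 0 < h / 2 ^ j := by positivity
  have hr : ∀ i, 0 ≤ (x i - a i) / (h / 2 ^ j) := fun i =>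
    div_nonneg (sub_nonneg.2 (mem_cube.1 hx i).1) hw.le
  refine ⟨fun i => ⌊(x i - a i) / (h / 2 ^ j)⌋₊, fun i => ?_, mem_cube.2 fun i => ?_⟩
  · rw [Nat.floor_lt (hr i), div_lt_iff₀ hw, Nat.cast_pow, Nat.cast_ofNat,
      mul_div_cancel₀ h (by positivity)]
    linarith [(mem_cube.1 hx i).2]
  · have hlo := (le_div_iff₀ hw).1 (Nat.floor_le (hr i))
    have hhi := (div_lt_iff₀ hw).1 (Nat.lt_floor_add_one ((x i - a i) / (h / 2 ^ j)))
    constructor <;> linarith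

theorem disjoint_dyadicCube (hh : 0 < h) {k k' : Fin n → ℕ} (hkk : k ≠ k') :
    Disjoint (dyadicCube a h j k) (dyadicCube a h j k') := by
  obtain ⟨i, hi⟩ := Function.ne_iff.1 hkk
  refine Set.disjoint_left.2 fun x hx hx' => ?_
  have hxi := mem_cube.1 hx i
  have hxi' := mem_cube.1 hx' i
  have hw : 0 < h / 2 ^ j := by positivity
  rcases hi.lt_or_gt with hlt | hlt
  · have : (k i + 1 : ℝ) * (h / 2 ^ j) ≤ k' i * (h / 2 ^ j) := by gcongr; exact_mod_cast hlt
    linarith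
  · have : (k' i + 1 : ℝ) * (h / 2 ^ j) ≤ k i * (h / 2 ^ j) := by gcongr; exact_mod_cast hlt
    linarith

end Dyadic

section Median

def medSet (σ : ℝ) (f : (Fin n → ℝ) → ℝ) (Q : Set (Fin n → ℝ)) : Set ℝ :=
  {l | volume.real {x ∈ Q | f x < l} ≤ σ * volume.real Q}

variable {σ : ℝ} {f : (Fin n → ℝ) → ℝ} {Q : Set (Fin n → ℝ)}

theorem med_eq_sSup_medSet : med σ f Q = sSup (medSet σ f Q) := rfl

theorem mem_medSet_iff (hf : Measurable f) (hQ : volume Q ≠ ⊤) {l : ℝ} :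
    l ∈ medSet σ f Q ↔ (1 - σ) * volume.real Q ≤ volume.real {x ∈ Q | l ≤ f x} := by
  have hsplit :=
    measureReal_inter_add_sdiff (s := Q) (measurableSet_lt hf (measurable_const (a := l))) hQ
  have hge : Q \ {x | f x < l} = {x ∈ Q | l ≤ f x} := by ext; simp
  rw [hge] at hsplit
  change volume.real (Q ∩ {x | f x < l}) ≤ σ * volume.real Q ↔ _
  constructor <;> intro <;> linarith

theorem mem_medSet_iff_volume_le (hσ : 0 ≤ σ) (hQ : volume Q ≠ ⊤) {l : ℝ} :
    l ∈ medSet σ f Q ↔ volume {x ∈ Q | f x < l} ≤ ENNReal.ofReal (σ * volume.real Q) :=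
  (ENNReal.le_ofReal_iff_toReal_le (measure_ne_top_of_subset (Set.sep_subset _ _) hQ)
    (by positivity)).symm

theorem isLowerSet_medSet (hQ : volume Q ≠ ⊤) : IsLowerSet (medSet σ f Q) := by
  intro l l' hll' hl
  refine (measureReal_mono ?_ (measure_ne_top_of_subset (Set.sep_subset _ _) hQ)).trans hl
  exact fun x hx => ⟨hx.1, hx.2.trans_le hll'⟩

theorem zero_mem_medSet (hσ : 0 ≤ σ) (hf : ∀ x, 0 ≤ f x) : 0 ∈ medSet σ f Q := by
  have hempty : {x ∈ Q | f x < 0} = ∅ :=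
    Set.eq_empty_of_forall_notMem fun x hx => (hf x).not_gt hx.2
  simp only [medSet, Set.mem_ofPred_eq, hempty, measureReal_empty]
  positivity

theorem le_of_mem_medSet (hσ : σ < 1) (hQ : 0 < volume.real Q) {b : ℝ} (hb : ∀ x ∈ Q, f x < b)
    {l : ℝ} (hl : l ∈ medSet σ f Q) : l ≤ b := by
  by_contra! hbl
  have hall : {x ∈ Q | f x < l} = Q :=
    Set.sep_eq_self_iff_mem_true.2 fun x hx => (hb x hx).trans hbl
  rw [medSet, Set.mem_ofPred_eq, hall] at hl
  nlinarith

theorem sSup_medSet_mem (hσ : 0 ≤ σ) (hQ : volume Q ≠ ⊤) (hne : (medSet σ f Q).Nonempty) :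
    sSup (medSet σ f Q) ∈ medSet σ f Q := by
  set m := sSup (medSet σ f Q)
  obtain ⟨u, hu_mono, hu_lt, hu_lim⟩ := exists_seq_strictMono_tendsto' (sub_one_lt m)
  have hunion : {x ∈ Q | f x < m} = ⋃ k, {x ∈ Q | f x < u k} := by
    ext x
    simp only [Set.mem_sep_iff, Set.mem_iUnion]
    constructor
    · rintro ⟨hx, hfx⟩
      obtain ⟨k, hk⟩ := (hu_lim.eventually (lt_mem_nhds hfx)).exists
      exact ⟨k, hx, hk⟩
    · rintro ⟨k, hx, hfx⟩
      exact ⟨hx, hfx.trans (hu_lt k).2⟩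
  have hmono : Monotone fun k => {x ∈ Q | f x < u k} := fun _ _ hkk _ hx =>
    ⟨hx.1, hx.2.trans_le (hu_mono.monotone hkk)⟩
  rw [mem_medSet_iff_volume_le hσ hQ, hunion, hmono.measure_iUnion]
  refine iSup_le fun k => ?_
  obtain ⟨l, hl, hul⟩ := exists_lt_of_lt_csSup hne (hu_lt k).2
  exact (mem_medSet_iff_volume_le hσ hQ).1 (isLowerSet_medSet hQ hul.le hl)

end Median

section FreeVol

def IsFreePacking (E Q0 : Set (Fin n → ℝ)) (s δ : ℝ) (F : Finset (Set (Fin n → ℝ))) : Prop :=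
  (∀ Q ∈ F, IsDyadicSubcubeOf Q0 Q ∧ Q ∩ E = ∅ ∧ δ ≤ volume.real Q) ∧
    (F : Set (Set (Fin n → ℝ))).PairwiseDisjoint id ∧
    (1 - s) * volume.real Q0 ≤ ∑ Q ∈ F, volume.real Q

variable {E Q0 : Set (Fin n → ℝ)} {s : ℝ}

theorem freeVol_nonneg : 0 ≤ freeVol E Q0 s :=
  Real.sSup_nonneg fun _ hδ => hδ.1.le

theorem IsFreePacking.le_volume_real (hs : s < 1) {a : Fin n → ℝ} {h δ : ℝ} (hh : 0 < h)
    {F : Finset (Set (Fin n → ℝ))} (hF : IsFreePacking E (cube a h) s δ F) :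
    δ ≤ volume.real (cube a h) := by
  obtain ⟨hcubes, -, hsum⟩ := hF
  have hpos : 0 < (1 - s) * volume.real (cube a h) := by
    rw [volume_real_cube a hh.le]
    nlinarith [pow_pos hh n]
  obtain ⟨Q, hQF⟩ : F.Nonempty := by
    by_contra! hF
    simp [hF] at hsum
    linarith
  obtain ⟨hdyadic, -, hδ⟩ := hcubes Q hQF
  obtain ⟨-, -, -, -, hQ⟩ := hdyadic.exists_eq_cube_subset
  exact hδ.trans (measureReal_mono hQ (volume_cube_ne_top a hh.le))

theorem le_freeVol (hs : s < 1) {a : Fin n → ℝ} {h δ : ℝ} (hh : 0 < h) (hδ : 0 < δ)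
    {F : Finset (Set (Fin n → ℝ))} (hF : IsFreePacking E (cube a h) s δ F) :
    δ ≤ freeVol E (cube a h) s :=
  le_csSup ⟨volume.real (cube a h), fun _ ⟨_, _, hF'⟩ => IsFreePacking.le_volume_real hs hh hF'⟩
    ⟨hδ, F, hF⟩

end FreeVol

section MedianInfDist

variable {E : Set (Fin n → ℝ)} {a : Fin n → ℝ} {h σ : ℝ}

theorem le_of_mem_medSet_infDist (hσ : σ < 1) (hh : 0 < h) (hQE : (cube a h ∩ E).Nonempty)
    {l : ℝ} (hl : l ∈ medSet σ (fun x => infDist x E) (cube a h)) : l ≤ h := by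
  obtain ⟨e, he, heE⟩ := hQE
  refine le_of_mem_medSet hσ (by rw [volume_real_cube a hh.le]; positivity) (fun x hx => ?_) hl
  exact (infDist_le_dist_of_mem heE).trans_lt (dist_lt_of_mem_cube hh hx he)

theorem bddAbove_medSet_infDist (hσ : σ < 1) (hh : 0 < h) (hQE : (cube a h ∩ E).Nonempty) :
    BddAbove (medSet σ (fun x => infDist x E) (cube a h)) :=
  ⟨h, fun _ => le_of_mem_medSet_infDist hσ hh hQE⟩

theorem zero_mem_medSet_infDist (hσ : 0 ≤ σ) :
    (0 : ℝ) ∈ medSet σ (fun x => infDist x E) (cube a h) :=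
  zero_mem_medSet hσ fun _ => infDist_nonneg

theorem med_infDist_nonneg (hσ0 : 0 ≤ σ) (hσ : σ < 1) (hh : 0 < h)
    (hQE : (cube a h ∩ E).Nonempty) : 0 ≤ med σ (fun x => infDist x E) (cube a h) :=
  le_csSup (bddAbove_medSet_infDist hσ hh hQE) (zero_mem_medSet_infDist hσ0)

end MedianInfDist

section LowerBound

variable {E : Set (Fin n → ℝ)} {a : Fin n → ℝ} {h s : ℝ}

theorem IsFreePacking.of_le {Q0 : Set (Fin n → ℝ)} {δ δ' : ℝ} {F : Finset (Set (Fin n → ℝ))}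
    (hF : IsFreePacking E Q0 s δ F) (hδ : δ' ≤ δ) : IsFreePacking E Q0 s δ' F :=
  ⟨fun Q hQ => (hF.1 Q hQ).imp_right (And.imp_right hδ.trans), hF.2⟩

/-- The dyadic cubes of generation `j` that meet `{l ≤ infDist · E}` form a free packing. -/
theorem exists_isFreePacking (hh : 0 < h) (j : ℕ) {l : ℝ} (hl : h / 2 ^ j ≤ l)
    (hvol : (1 - s) * volume.real (cube a h) ≤ volume.real {x ∈ cube a h | l ≤ infDist x E}) :
    ∃ F, IsFreePacking E (cube a h) s ((h / 2 ^ j) ^ n) F := by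
  classical
  have hw : 0 < h / 2 ^ j := by positivity
  let K := (Fintype.piFinset fun _ : Fin n => Finset.range (2 ^ j)).filter
    fun k => ∃ x ∈ dyadicCube a h j k, l ≤ infDist x E
  have hK : ∀ k ∈ K, ∀ i, k i < 2 ^ j := fun k hk i =>
    Finset.mem_range.1 (Fintype.mem_piFinset.1 (Finset.mem_filter.1 hk).1 i)
  refine ⟨K.image (dyadicCube a h j), fun Q hQ => ?_, ?_, ?_⟩
  · obtain ⟨k, hk, rfl⟩ := Finset.mem_image.1 hQ
    obtain ⟨x, hx, hlx⟩ := (Finset.mem_filter.1 hk).2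
    exact ⟨isDyadicSubcubeOf_dyadicCube hh (hK k hk),
      cube_inter_eq_empty_of_le_infDist hw hx (hl.trans hlx), (volume_real_cube _ hw.le).ge⟩
  · rw [Finset.coe_image]
    rintro _ ⟨k, -, rfl⟩ _ ⟨k', -, rfl⟩ hne
    exact disjoint_dyadicCube hh fun hkk => hne (congrArg _ hkk)
  · have hcover : {x ∈ cube a h | l ≤ infDist x E} ⊆ ⋃ Q ∈ K.image (dyadicCube a h j), Q := by
      rintro x ⟨hx, hlx⟩
      obtain ⟨k, hk, hxk⟩ := exists_mem_dyadicCube hh j hx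
      refine Set.mem_biUnion (Finset.mem_image_of_mem _ (Finset.mem_filter.2 ⟨?_, x, hxk, hlx⟩)) hxk
      exact Fintype.mem_piFinset.2 fun i => Finset.mem_range.2 (hk i)
    have hfin : volume (⋃ Q ∈ K.image (dyadicCube a h j), Q) ≠ ⊤ :=
      (measure_biUnion_lt_top (Finset.finite_toSet _) fun Q hQ => by
        obtain ⟨k, -, rfl⟩ := Finset.mem_image.1 hQ
        exact (volume_cube_ne_top _ hw.le).lt_top).ne
    exact hvol.trans ((measureReal_mono hcover hfin).trans (measureReal_biUnion_finset_le _ _))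

theorem med_pow_le_two_pow_mul_freeVol (hn : 0 < n) (hs : 0 ≤ s) (hs1 : s < 1) (hh : 0 < h)
    (hQE : (cube a h ∩ E).Nonempty) :
    med s (fun x => infDist x E) (cube a h) ^ n ≤ 2 ^ n * freeVol E (cube a h) s := by
  have hm_nonneg := med_infDist_nonneg hs hs1 hh hQE
  rw [med_eq_sSup_medSet] at hm_nonneg ⊢
  set m := sSup (medSet s (fun x => infDist x E) (cube a h))
  have hm_mem : m ∈ medSet s (fun x => infDist x E) (cube a h) :=
    sSup_medSet_mem hs (volume_cube_ne_top a hh.le) ⟨0, zero_mem_medSet_infDist hs⟩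
  rcases hm_nonneg.eq_or_lt with hm0 | hm0
  · rw [← hm0, zero_pow hn.ne']
    exact mul_nonneg (by positivity) freeVol_nonneg
  obtain ⟨j, hjm, hmj⟩ :=
    exists_nat_pow_near ((one_le_div hm0).2 (le_of_mem_medSet_infDist hs1 hh hQE hm_mem)) one_lt_two
  rw [le_div_iff₀ hm0] at hjm
  rw [div_lt_iff₀ hm0, ← div_lt_iff₀' (by positivity)] at hmj
  have hmw : m / 2 ≤ h / 2 ^ (j + 1) := by
    rw [pow_succ, le_div_iff₀ (by positivity)]
    linarith
  obtain ⟨F, hF⟩ := exists_isFreePacking hh (j + 1) hmj.le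
    ((mem_medSet_iff (continuous_infDist_pt E).measurable (volume_cube_ne_top a hh.le)).1 hm_mem)
  calc m ^ n = 2 ^ n * (m / 2) ^ n := by rw [← mul_pow, mul_div_cancel₀ m two_ne_zero]
    _ ≤ 2 ^ n * freeVol E (cube a h) s := by
      gcongr
      exact le_freeVol hs1 hh (by positivity) (hF.of_le (by gcongr))

end LowerBound

section UpperBound

variable {E : Set (Fin n → ℝ)} {a : Fin n → ℝ} {h s t : ℝ}

theorem IsFreePacking.pow_mul_le_volume_real (hn : n ≠ 0) (hE : E.Nonempty) (hh : 0 < h)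
    {r c : ℝ} (hr : 0 < r) (hc0 : 0 ≤ c) (hc1 : 2 * c ≤ 1) {F : Finset (Set (Fin n → ℝ))}
    (hF : IsFreePacking E (cube a h) s (r ^ n) F) :
    (1 - 2 * c) ^ n * ((1 - s) * volume.real (cube a h)) ≤
      volume.real {x ∈ cube a h | c * r ≤ infDist x E} := by
  obtain ⟨hcubes, hdisj, hsum⟩ := hF
  have hQcube : ∀ Q ∈ F, ∃ b w, 0 < w ∧ Q = cube b w ∧ Q ⊆ cube a h := fun Q hQ =>
    (hcubes Q hQ).1.exists_eq_cube_subset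
  have hshrink : ∀ Q ∈ F,
      (1 - 2 * c) ^ n * volume.real Q ≤ volume.real (Q ∩ {x | c * r ≤ infDist x E}) := by
    intro Q hQ
    obtain ⟨b, w, hw, rfl, -⟩ := hQcube Q hQ
    obtain ⟨-, hfree, hrQ⟩ := hcubes _ hQ
    rw [volume_real_cube b hw.le] at hrQ ⊢
    have hrw : r ≤ w := (pow_le_pow_iff_left₀ hr.le hw.le hn).1 hrQ
    have hcrw : 2 * (c * r) ≤ 2 * c * w := by rw [← mul_assoc]; gcongr
    calc (1 - 2 * c) ^ n * w ^ n = ((1 - 2 * c) * w) ^ n := (mul_pow _ _ _).symm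
      _ ≤ (w - 2 * (c * r)) ^ n := by gcongr; linarith
      _ ≤ _ := pow_le_volume_real_cube_inter_le_infDist hE (by positivity)
        (hcrw.trans (mul_le_of_le_one_left hw.le hc1)) hfree
  have hQfin : ∀ Q ∈ F, volume (Q ∩ {x | c * r ≤ infDist x E}) ≠ ⊤ := fun Q hQ => by
    obtain ⟨b, w, hw, rfl, -⟩ := hQcube Q hQ
    exact measure_ne_top_of_subset Set.inter_subset_left (volume_cube_ne_top b hw.le)
  calc (1 - 2 * c) ^ n * ((1 - s) * volume.real (cube a h))
      ≤ ∑ Q ∈ F, (1 - 2 * c) ^ n * volume.real Q := by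
        rw [← Finset.mul_sum]
        gcongr
    _ ≤ ∑ Q ∈ F, volume.real (Q ∩ {x | c * r ≤ infDist x E}) := Finset.sum_le_sum hshrink
    _ = volume.real (⋃ Q ∈ F, Q ∩ {x | c * r ≤ infDist x E}) := by
        refine (measureReal_biUnion_finset (fun Q hQ Q' hQ' hne => ?_) (fun Q hQ => ?_) hQfin).symm
        · exact (hdisj hQ hQ' hne).mono Set.inter_subset_left Set.inter_subset_left
        · obtain ⟨b, w, -, rfl, -⟩ := hQcube Q hQ
          exact (measurableSet_cube b w).inter
            (measurableSet_le measurable_const (continuous_infDist_pt E).measurable)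
    _ ≤ volume.real {x ∈ cube a h | c * r ≤ infDist x E} := by
        refine measureReal_mono (Set.iUnion₂_subset fun Q hQ x hx => ⟨?_, hx.2⟩)
          (measure_ne_top_of_subset (Set.sep_subset _ _) (volume_cube_ne_top a hh.le))
        obtain ⟨b, w, -, rfl, hsub⟩ := hQcube Q hQ
        exact hsub hx.1

theorem mul_le_med_of_isFreePacking (hn : 0 < n) (hst : s < t) (ht : t < 1) (hE : E.Nonempty)
    (hh : 0 < h) (hQE : (cube a h ∩ E).Nonempty) {r : ℝ} (hr : 0 < r)
    {F : Finset (Set (Fin n → ℝ))} (hF : IsFreePacking E (cube a h) s (r ^ n) F) :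
    (t - s) / (1 - s) / (2 * n) * r ≤ med t (fun x => infDist x E) (cube a h) := by
  set c := (t - s) / (1 - s) / (2 * n)
  have hs1 : 0 < 1 - s := by linarith
  have hcn : 2 * c * n = (t - s) / (1 - s) := by
    simp only [c]
    field_simp
  have hc1 : 2 * c ≤ 1 := by
    have : (t - s) / (1 - s) ≤ 1 := (div_le_one hs1).2 (by linarith)
    nlinarith [(Nat.one_le_cast (α := ℝ)).2 hn]
  have hc0 : 0 ≤ c := div_nonneg (div_nonneg (by linarith) hs1.le) (by positivity)
  have hfar : (1 - t) * volume.real (cube a h) ≤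
      volume.real {x ∈ cube a h | c * r ≤ infDist x E} := calc
    (1 - t) * volume.real (cube a h) = (1 + n * -(2 * c)) * ((1 - s) * volume.real (cube a h)) := by
        rw [mul_neg, mul_comm (n : ℝ), hcn]
        field_simp
        ring
    _ ≤ (1 - 2 * c) ^ n * ((1 - s) * volume.real (cube a h)) := by
        gcongr
        exact (one_add_mul_le_pow (by linarith) n).trans_eq (by ring)
    _ ≤ _ := hF.pow_mul_le_volume_real hn.ne' hE hh hr hc0 hc1
  exact le_csSup (bddAbove_medSet_infDist ht hh hQE)
    ((mem_medSet_iff (continuous_infDist_pt E).measurable (volume_cube_ne_top a hh.le)).2 hfar)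

theorem freeVol_le_mul_med_pow (hn : 0 < n) (ht0 : 0 ≤ t) (hst : s < t) (ht : t < 1)
    (hE : E.Nonempty) (hh : 0 < h) (hQE : (cube a h ∩ E).Nonempty) :
    freeVol E (cube a h) s ≤
      ((t - s) / (1 - s) / (2 * n))⁻¹ ^ n * med t (fun x => infDist x E) (cube a h) ^ n := by
  set c := (t - s) / (1 - s) / (2 * n)
  set m := med t (fun x => infDist x E) (cube a h)
  have hc : 0 < c := div_pos (div_pos (by linarith) (by linarith)) (by positivity)
  have hm : 0 ≤ m := med_infDist_nonneg ht0 ht hh hQE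
  refine Real.sSup_le (fun δ ⟨hδ, F, hF⟩ => ?_) (by positivity)
  set r := δ ^ (n⁻¹ : ℝ)
  have hr : r ^ n = δ := Real.rpow_inv_natCast_pow hδ.le hn.ne'
  rw [← hr] at hF ⊢
  have hcr : c * r ≤ m := mul_le_med_of_isFreePacking hn hst ht hE hh hQE (by positivity) hF
  calc r ^ n = (c⁻¹ * (c * r)) ^ n := by rw [inv_mul_cancel_left₀ hc.ne']
    _ ≤ (c⁻¹ * m) ^ n := by gcongr
    _ = c⁻¹ ^ n * m ^ n := mul_pow _ _ _

end UpperBound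

end

theorem median_dist_vs_freeVol (n : ℕ) (s t : ℝ) (hs : 0 < s) (hst : s < t) (ht : t < 1) :
    ∃ C : ℝ, 0 < C ∧
      ∀ E Q0 : Set (Fin n → ℝ), E.Nonempty → E ≠ Set.univ → IsCube Q0 →
        (Q0 ∩ E).Nonempty →
        (med s (fun x => Metric.infDist x E) Q0) ^ n ≤ 2 ^ n * freeVol E Q0 s ∧
        freeVol E Q0 s ≤ C * (med t (fun x => Metric.infDist x E) Q0) ^ n := by
  rcases n.eq_zero_or_pos with rfl | hn
  · exact ⟨1, one_pos, fun E _ hE hEuniv _ _ => absurd hE.eq_univ hEuniv⟩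
  have hc : 0 < (t - s) / (1 - s) / (2 * n) :=
    div_pos (div_pos (by linarith) (by linarith)) (by positivity)
  refine ⟨((t - s) / (1 - s) / (2 * n))⁻¹ ^ n, by positivity, fun E _ hE _ hQ hQE => ?_⟩
  obtain ⟨a, h, hh, rfl⟩ := hQ
  exact ⟨med_pow_le_two_pow_mul_freeVol hn hs.le (hst.trans ht) hh hQE,
    freeVol_le_mul_med_pow hn (hs.trans hst).le hst ht hE hh hQE⟩
end
end
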